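/- arXiv:2306.13005 — 6 statements merged into one kernel-verified Lean document; each statement's English description precedes it below -/
import Mathlib

section
/- (λ-Condorcet winner criterion) Let d* minimize the risk R(d;λ) = Σ_{i>j} [π_{ji}d_{ij} + π_{ij}(1-e_{ij}-d_{ij}) - λπ_{ji}(1-e_{ij}-d_{ij}) - λπ_{ij}d_{ij}] over all grade assignments d ∈ ℕ^n (with d_{ij}=1{d_i>d_j}, e_{ij}=1{d_i=d_j}). If firm i satisfies π_{ij} > 1/(1+λ) for all j ≠ i, then in any optimal solution d*, d*_i > d*_j for all j ≠ i. -/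
open Finset

/-- Risk of a grade assignment (paper's eq. obj2), written with grade vectors. -/
noncomputable def Risk {n : ℕ} (π : Fin n → Fin n → ℝ) (lam : ℝ) (d : Fin n → ℕ) : ℝ :=
  ∑ i : Fin n, ∑ j ∈ Finset.univ.filter (· < i),
    ((π j i - lam * π i j) * (if d i > d j then (1:ℝ) else 0)
      + (π i j - lam * π j i) * (if d i < d j then (1:ℝ) else 0))

/-- λ-Condorcet winner criterion: a firm beating every other firm with posterior
probability above 1/(1+λ) receives a strictly higher grade than every other firm
in any risk-minimizing grade assignment. -/
theorem stmt5 {n : ℕ} (π : Fin n → Fin n → ℝ)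
    (hπ01 : ∀ i j : Fin n, i ≠ j → π i j ∈ Set.Icc (0:ℝ) 1)
    (hπ : ∀ i j : Fin n, i ≠ j → π i j + π j i = 1)
    (lam : ℝ) (hlam : lam ∈ Set.Ioc (0:ℝ) 1)
    (i : Fin n) (hwin : ∀ j : Fin n, j ≠ i → π i j > 1 / (1 + lam))
    (dstar : Fin n → ℕ) (hopt : ∀ d : Fin n → ℕ, Risk π lam dstar ≤ Risk π lam d) :
    ∀ j : Fin n, j ≠ i → dstar i > dstar j := by
  intro j hj
  by_contra hle
  push_neg at hle
  obtain ⟨hlam0, hlam1⟩ := hlam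
  have h1l : (0:ℝ) < 1 + lam := by linarith
  -- key sign facts
  have hAB : ∀ k : Fin n, k ≠ i →
      π k i - lam * π i k < 0 ∧ 0 ≤ π i k - lam * π k i := by
    intro k hk
    have hw := hwin k hk
    have hs := hπ i k (Ne.symm hk)
    have h1 : 1 / (1 + lam) * (1 + lam) = 1 := by field_simp
    constructor
    · nlinarith
    · nlinarith
  -- modified assignment
  set M := Finset.univ.sup dstar with hM
  set d' : Fin n → ℕ := fun k => if k = i then M + 1 else dstar k with hd'
  have hd'i : d' i = M + 1 := by simp [hd']
  have hd'k : ∀ k : Fin n, k ≠ i → d' k = dstar k := by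
    intro k hk; simp [hd', hk]
  have hgt : ∀ k : Fin n, k ≠ i → d' k < d' i := by
    intro k hk
    rw [hd'i, hd'k k hk]
    exact Nat.lt_succ_of_le (Finset.le_sup (Finset.mem_univ k))
  -- termwise comparison
  have hterm : ∀ a b : Fin n, b < a →
      ((π b a - lam * π a b) * (if d' a > d' b then (1:ℝ) else 0)
        + (π a b - lam * π b a) * (if d' a < d' b then (1:ℝ) else 0))
      ≤ ((π b a - lam * π a b) * (if dstar a > dstar b then (1:ℝ) else 0)
        + (π a b - lam * π b a) * (if dstar a < dstar b then (1:ℝ) else 0)) := by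
    intro a b hba
    have hab : a ≠ b := ne_of_gt hba
    by_cases ha : a = i
    · subst ha
      have hb : b ≠ a := fun h => hab h.symm
      have h1 : d' b < d' a := hgt b hb
      obtain ⟨hA, hB⟩ := hAB b hb
      rw [if_pos h1, if_neg (not_lt.mpr h1.le)]
      split_ifs <;> nlinarith
    · by_cases hb : b = i
      · subst hb
        have h1 : d' a < d' b := hgt a ha
        obtain ⟨hA, hB⟩ := hAB a ha
        rw [if_neg (not_lt.mpr h1.le), if_pos h1]
        split_ifs <;> nlinarith
      · rw [hd'k a ha, hd'k b hb]
  -- strict comparison for the violating pair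
  have hstrict : ∀ a b : Fin n, b < a → (a = i ∧ dstar a ≤ dstar b ∨ b = i ∧ dstar b ≤ dstar a) →
      ((π b a - lam * π a b) * (if d' a > d' b then (1:ℝ) else 0)
        + (π a b - lam * π b a) * (if d' a < d' b then (1:ℝ) else 0))
      < ((π b a - lam * π a b) * (if dstar a > dstar b then (1:ℝ) else 0)
        + (π a b - lam * π b a) * (if dstar a < dstar b then (1:ℝ) else 0)) := by
    intro a b hba hcase
    have hab : a ≠ b := ne_of_gt hba
    rcases hcase with ⟨ha, hds⟩ | ⟨hb, hds⟩
    · subst ha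
      have hb : b ≠ a := fun h => hab h.symm
      have h1 : d' b < d' a := hgt b hb
      obtain ⟨hA, hB⟩ := hAB b hb
      rw [if_pos h1, if_neg (not_lt.mpr h1.le), if_neg (not_lt.mpr hds)]
      split_ifs <;> nlinarith
    · subst hb
      have h1 : d' a < d' b := hgt a hab
      obtain ⟨hA, hB⟩ := hAB a hab
      rw [if_neg (not_lt.mpr h1.le), if_pos h1, if_neg (not_lt.mpr hds)]
      split_ifs <;> nlinarith
  have hlt : Risk π lam d' < Risk π lam dstar := by
    unfold Risk
    apply Finset.sum_lt_sum
    · intro a _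
      apply Finset.sum_le_sum
      intro b hb
      exact hterm a b (Finset.mem_filter.mp hb).2
    · rcases lt_or_gt_of_ne hj with hji | hij
      · -- j < i : strict at outer index i, inner index j
        refine ⟨i, Finset.mem_univ i, Finset.sum_lt_sum (fun b hb => hterm i b (Finset.mem_filter.mp hb).2) ⟨j, ?_, ?_⟩⟩
        · exact Finset.mem_filter.mpr ⟨Finset.mem_univ j, hji⟩
        · exact hstrict i j hji (Or.inl ⟨rfl, hle⟩)
      · -- i < j : strict at outer index j, inner index i
        refine ⟨j, Finset.mem_univ j, Finset.sum_lt_sum (fun b hb => hterm j b (Finset.mem_filter.mp hb).2) ⟨i, ?_, ?_⟩⟩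
        · exact Finset.mem_filter.mpr ⟨Finset.mem_univ i, hij⟩
        · exact hstrict j i hij (Or.inr ⟨rfl, hle⟩)
  exact absurd (hopt d') (not_le.mpr hlt)
end

section
/- (λ-Condorcet, second place) Under the setting of the λ-Condorcet criterion, if additionally firm k satisfies π_{ik} > 1/(1+λ) and π_{kj} > 1/(1+λ) for all j ∉ {i,k}, then any risk-minimizing grade assignment d* satisfies d*_i > d*_k > d*_j for all j ∉ {i,k}. -/
open Finset

/-- Per-pair contribution to the risk. -/
noncomputable def pairT {n : ℕ} (π : Fin n → Fin n → ℝ) (lam : ℝ) (d : Fin n → ℕ)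
    (a b : Fin n) : ℝ :=
  (π b a - lam * π a b) * (if d a > d b then (1:ℝ) else 0)
    + (π a b - lam * π b a) * (if d a < d b then (1:ℝ) else 0)

lemma Risk_eq {n : ℕ} (π : Fin n → Fin n → ℝ) (lam : ℝ) (d : Fin n → ℕ) :
    Risk π lam d = ∑ a : Fin n, ∑ b ∈ Finset.univ.filter (· < a), pairT π lam d a b := rfl

lemma pairT_symm {n : ℕ} (π : Fin n → Fin n → ℝ) (lam : ℝ) (d : Fin n → ℕ) (a b : Fin n) :
    pairT π lam d a b = pairT π lam d b a := by
  simp only [pairT, gt_iff_lt]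
  ring

lemma improve {n : ℕ} (π : Fin n → Fin n → ℝ) (lam : ℝ) (d d' : Fin n → ℕ)
    (hle : ∀ a b : Fin n, a ≠ b → pairT π lam d' a b ≤ pairT π lam d a b)
    (a0 b0 : Fin n) (hne : a0 ≠ b0)
    (hstrict : pairT π lam d' a0 b0 < pairT π lam d a0 b0) :
    Risk π lam d' < Risk π lam d := by
  -- orient the strict pair
  obtain ⟨a1, b1, hlt1, hs1⟩ : ∃ a1 b1 : Fin n, b1 < a1 ∧
      pairT π lam d' a1 b1 < pairT π lam d a1 b1 := by
    rcases lt_or_gt_of_ne hne with h | h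
    · exact ⟨b0, a0, h, by rwa [pairT_symm π lam d' , pairT_symm π lam d]⟩
    · exact ⟨a0, b0, h, hstrict⟩
  rw [Risk_eq, Risk_eq]
  apply Finset.sum_lt_sum
  · intro a _
    apply Finset.sum_le_sum
    intro b hb
    simp only [mem_filter] at hb
    exact hle a b (ne_of_gt hb.2)
  · refine ⟨a1, Finset.mem_univ _, ?_⟩
    apply Finset.sum_lt_sum
    · intro b hb
      simp only [mem_filter] at hb
      exact hle a1 b (ne_of_gt hb.2)
    · exact ⟨b1, by simp [hlt1], hs1⟩

/-- λ-Condorcet, second place: with a λ-Condorcet winner i and a firm k beating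
everyone except i, any risk-minimizing assignment puts i strictly above k and k
strictly above all remaining firms. -/
theorem stmt6 {n : ℕ} (π : Fin n → Fin n → ℝ)
    (hπ01 : ∀ i j : Fin n, i ≠ j → π i j ∈ Set.Icc (0:ℝ) 1)
    (hπ : ∀ i j : Fin n, i ≠ j → π i j + π j i = 1)
    (lam : ℝ) (hlam : lam ∈ Set.Ioc (0:ℝ) 1)
    (i k : Fin n) (hik : i ≠ k)
    (hwin : ∀ j : Fin n, j ≠ i → π i j > 1 / (1 + lam))
    (hk : ∀ j : Fin n, j ≠ i → j ≠ k → π k j > 1 / (1 + lam))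
    (dstar : Fin n → ℕ) (hopt : ∀ d : Fin n → ℕ, Risk π lam dstar ≤ Risk π lam d) :
    dstar i > dstar k ∧ ∀ j : Fin n, j ≠ i → j ≠ k → dstar k > dstar j := by
  obtain ⟨hlam0, hlam1⟩ := hlam
  have hlam1' : (0:ℝ) < 1 + lam := by linarith
  -- basic sign facts for a pair with π a b > 1/(1+λ)
  have gneg : ∀ a b : Fin n, a ≠ b → π a b > 1 / (1 + lam) →
      π b a - lam * π a b < 0 := by
    intro a b hab h
    have h1 := hπ a b hab
    have h2 : (1 + lam) * π a b > 1 := by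
      rw [gt_iff_lt, div_lt_iff₀ hlam1'] at h
      linarith
    nlinarith
  have ppos : ∀ a b : Fin n, a ≠ b → π a b > 1 / (1 + lam) →
      (0:ℝ) ≤ π a b - lam * π b a := by
    intro a b hab h
    have h1 := hπ a b hab
    have h2 : (1 + lam) * π a b > 1 := by
      rw [gt_iff_lt, div_lt_iff₀ hlam1'] at h
      linarith
    nlinarith
  -- if d a > d b then pairT equals the negative value
  have pairT_top : ∀ (d : Fin n → ℕ) (a b : Fin n), d a > d b →
      pairT π lam d a b = π b a - lam * π a b := by
    intro d a b h
    have h2 : ¬ (d a < d b) := by omega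
    simp [pairT, h, h2]
  have pairT_other : ∀ (d : Fin n → ℕ) (a b : Fin n), a ≠ b → π a b > 1 / (1 + lam) →
      ¬ (d a > d b) → (0:ℝ) ≤ pairT π lam d a b := by
    intro d a b hab h hnot
    simp only [pairT, if_neg hnot, mul_zero, zero_add]
    rcases lt_or_ge (d a) (d b) with h' | h'
    · simp only [if_pos h', mul_one]
      exact ppos a b hab h
    · have : ¬ (d a < d b) := not_lt.mpr h'
      simp [this]
  have pairT_min : ∀ (d : Fin n → ℕ) (a b : Fin n), a ≠ b → π a b > 1 / (1 + lam) →
      π b a - lam * π a b ≤ pairT π lam d a b := by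
    intro d a b hab h
    rcases lt_or_ge (d b) (d a) with h' | h'
    · rw [pairT_top d a b h']
    · have hnot : ¬ (d a > d b) := not_lt.mpr h'
      exact le_trans (le_of_lt (gneg a b hab h)) (pairT_other d a b hab h hnot)
  set M : ℕ := Finset.univ.sup dstar with hM
  have hMle : ∀ a : Fin n, dstar a ≤ M := fun a => Finset.le_sup (Finset.mem_univ a)
  -- Part 1: i is above everyone
  have part1 : ∀ j : Fin n, j ≠ i → dstar i > dstar j := by
    intro j0 hj0
    by_contra hcon
    push_neg at hcon
    set d' : Fin n → ℕ := fun a => if a = i then M + 1 else dstar a with hd'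
    have hd'i : d' i = M + 1 := by simp [hd']
    have hd'o : ∀ a : Fin n, a ≠ i → d' a = dstar a := by
      intro a ha; simp [hd', ha]
    have hle : ∀ a b : Fin n, a ≠ b → pairT π lam d' a b ≤ pairT π lam dstar a b := by
      intro a b hab
      by_cases hai : a = i
      · subst hai
        have hbi : b ≠ a := hab.symm
        have htop : d' a > d' b := by
          rw [hd'i, hd'o b hbi]
          exact Nat.lt_succ_of_le (hMle b)
        rw [pairT_top d' a b htop]
        exact pairT_min dstar a b hab (hwin b hbi)
      · by_cases hbi : b = i
        · subst hbi
          rw [pairT_symm π lam d', pairT_symm π lam dstar]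
          have htop : d' b > d' a := by
            rw [hd'i, hd'o a hai]
            exact Nat.lt_succ_of_le (hMle a)
          rw [pairT_top d' b a htop]
          exact pairT_min dstar b a hab.symm (hwin a hai)
        · have : pairT π lam d' a b = pairT π lam dstar a b := by
            simp [pairT, hd'o a hai, hd'o b hbi]
          exact le_of_eq this
    have hstrict : pairT π lam d' i j0 < pairT π lam dstar i j0 := by
      have htop : d' i > d' j0 := by
        rw [hd'i, hd'o j0 hj0]
        exact Nat.lt_succ_of_le (hMle j0)
      rw [pairT_top d' i j0 htop]
      have hnot : ¬ (dstar i > dstar j0) := not_lt.mpr hcon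
      exact lt_of_lt_of_le (gneg i j0 hj0.symm (hwin j0 hj0))
        (pairT_other dstar i j0 hj0.symm (hwin j0 hj0) hnot)
    exact absurd (hopt d') (not_le.mpr (improve π lam dstar d' hle i j0 hj0.symm hstrict))
  refine ⟨part1 k (Ne.symm hik), ?_⟩
  -- Part 2: k above everyone else
  intro j0 hj0i hj0k
  by_contra hcon
  push_neg at hcon
  set d' : Fin n → ℕ := fun a => if a = i then M + 2 else if a = k then M + 1 else dstar a with hd'
  have hd'i : d' i = M + 2 := by simp [hd']
  have hd'k : d' k = M + 1 := by simp [hd', (Ne.symm hik : k ≠ i)]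
  have hd'o : ∀ a : Fin n, a ≠ i → a ≠ k → d' a = dstar a := by
    intro a hai hak; simp [hd', hai, hak]
  have hd'top : ∀ a : Fin n, a ≠ i → d' i > d' a := by
    intro a hai
    rw [hd'i]
    by_cases hak : a = k
    · subst hak; rw [hd'k]; omega
    · rw [hd'o a hai hak]; have := hMle a; omega
  have hd'ktop : ∀ a : Fin n, a ≠ i → a ≠ k → d' k > d' a := by
    intro a hai hak
    rw [hd'k, hd'o a hai hak]
    exact Nat.lt_succ_of_le (hMle a)
  have hle : ∀ a b : Fin n, a ≠ b → pairT π lam d' a b ≤ pairT π lam dstar a b := by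
    intro a b hab
    by_cases hai : a = i
    · subst hai
      rw [pairT_top d' a b (hd'top b hab.symm)]
      exact pairT_min dstar a b hab (hwin b hab.symm)
    · by_cases hbi : b = i
      · subst hbi
        rw [pairT_symm π lam d', pairT_symm π lam dstar,
          pairT_top d' b a (hd'top a hai)]
        exact pairT_min dstar b a hab.symm (hwin a hai)
      · by_cases hak : a = k
        · subst hak
          rw [pairT_top d' a b (hd'ktop b hbi hab.symm)]
          exact pairT_min dstar a b hab (hk b hbi hab.symm)
        · by_cases hbk : b = k
          · subst hbk
            rw [pairT_symm π lam d', pairT_symm π lam dstar,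
              pairT_top d' b a (hd'ktop a hai hak)]
            exact pairT_min dstar b a hab.symm (hk a hai hak)
          · have : pairT π lam d' a b = pairT π lam dstar a b := by
              simp [pairT, hd'o a hai hak, hd'o b hbi hbk]
            exact le_of_eq this
  have hstrict : pairT π lam d' k j0 < pairT π lam dstar k j0 := by
    rw [pairT_top d' k j0 (hd'ktop j0 hj0i hj0k)]
    have hnot : ¬ (dstar k > dstar j0) := not_lt.mpr hcon
    exact lt_of_lt_of_le (gneg k j0 (fun h => hj0k h.symm) (hk j0 hj0i hj0k))
      (pairT_other dstar k j0 (fun h => hj0k h.symm) (hk j0 hj0i hj0k) hnot)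
  exact absurd (hopt d') (not_le.mpr (improve π lam dstar d' hle k j0 (fun h => hj0k h.symm) hstrict))
end

section
/- (λ-Smith criterion) Let S be a nonempty set of firms such that π_{ij} > 1/(1+λ) for every i ∈ S and j ∉ S. Then in any grade assignment d* minimizing R(d;λ), every firm attaining the maximal grade max_i d*_i belongs to S. -/
open Finset

/-- Single-pair contribution to the risk. -/
noncomputable def pairTerm {n : ℕ} (π : Fin n → Fin n → ℝ) (lam : ℝ) (d : Fin n → ℕ)
    (i j : Fin n) : ℝ :=
  (π j i - lam * π i j) * (if d i > d j then (1:ℝ) else 0)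
    + (π i j - lam * π j i) * (if d i < d j then (1:ℝ) else 0)

lemma pairTerm_comm {n : ℕ} (π : Fin n → Fin n → ℝ) (lam : ℝ) (d : Fin n → ℕ)
    (i j : Fin n) : pairTerm π lam d i j = pairTerm π lam d j i := by
  unfold pairTerm
  split_ifs <;> first | ring | omega

lemma Risk_eq_sum_pairTerm {n : ℕ} (π : Fin n → Fin n → ℝ) (lam : ℝ) (d : Fin n → ℕ) :
    Risk π lam d = ∑ i : Fin n, ∑ j ∈ Finset.univ.filter (· < i), pairTerm π lam d i j := rfl

/-- λ-Smith criterion: every firm attaining the maximal grade in a risk-minimizing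
assignment belongs to a dominant set S. -/
theorem stmt7 {n : ℕ} (π : Fin n → Fin n → ℝ)
    (hπ01 : ∀ i j : Fin n, i ≠ j → π i j ∈ Set.Icc (0:ℝ) 1)
    (hπ : ∀ i j : Fin n, i ≠ j → π i j + π j i = 1)
    (lam : ℝ) (hlam : lam ∈ Set.Ioc (0:ℝ) 1)
    (S : Finset (Fin n)) (hS : S.Nonempty)
    (hdom : ∀ i ∈ S, ∀ j ∉ S, π i j > 1 / (1 + lam))
    (dstar : Fin n → ℕ) (hopt : ∀ d : Fin n → ℕ, Risk π lam dstar ≤ Risk π lam d) :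
    ∀ i : Fin n, (∀ j : Fin n, dstar j ≤ dstar i) → i ∈ S := by
  intro imax hmax
  by_contra himax
  obtain ⟨s, hs⟩ := hS
  have hlam0 : (0:ℝ) < lam := hlam.1
  have hlam1 : lam ≤ 1 := hlam.2
  have h1lam : (0:ℝ) < 1 + lam := by linarith
  set K := dstar imax + 1 with hK
  set d' : Fin n → ℕ := fun j => if j ∈ S then dstar j + K else dstar j with hd'
  -- cross-pair lemma
  have cross : ∀ i j : Fin n, i ∈ S → j ∉ S →
      pairTerm π lam d' i j ≤ pairTerm π lam dstar i j ∧
      (dstar i ≤ dstar j → pairTerm π lam d' i j < pairTerm π lam dstar i j) := by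
    intro i j hi hj
    have hij : i ≠ j := fun h => hj (h ▸ hi)
    have hp : π i j > 1 / (1 + lam) := hdom i hi j hj
    have hsum : π i j + π j i = 1 := hπ i j hij
    have hp1 : 1 < π i j * (1 + lam) := (div_lt_iff₀ h1lam).mp hp
    have hA : π j i - lam * π i j < 0 := by nlinarith
    have hB : 0 ≤ π i j - lam * π j i := by nlinarith
    have hdi : d' i = dstar i + K := by simp [hd', hi]
    have hdj : d' j = dstar j := by simp [hd', hj]
    have hgt : d' i > d' j := by
      rw [hdi, hdj]
      have := hmax j
      omega
    have hnew : pairTerm π lam d' i j = π j i - lam * π i j := by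
      unfold pairTerm
      rw [if_pos hgt, if_neg (by omega)]; ring
    rcases lt_trichotomy (dstar i) (dstar j) with h | h | h
    · have hold : pairTerm π lam dstar i j = π i j - lam * π j i := by
        unfold pairTerm
        rw [if_neg (by omega), if_pos h]; ring
      constructor
      · rw [hnew, hold]; linarith
      · intro _; rw [hnew, hold]; linarith
    · have hold : pairTerm π lam dstar i j = 0 := by
        unfold pairTerm
        rw [if_neg (by omega), if_neg (by omega)]; ring
      constructor
      · rw [hnew, hold]; linarith
      · intro _; rw [hnew, hold]; linarith
    · have hold : pairTerm π lam dstar i j = π j i - lam * π i j := by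
        unfold pairTerm
        rw [if_pos h, if_neg (by omega)]; ring
      constructor
      · rw [hnew, hold]
      · intro hle; omega
  -- same-side pairs are unchanged
  have same : ∀ i j : Fin n, (i ∈ S ↔ j ∈ S) →
      pairTerm π lam d' i j = pairTerm π lam dstar i j := by
    intro i j hiff
    have h1 : (d' i > d' j) ↔ (dstar i > dstar j) := by
      by_cases hi : i ∈ S
      · have hj : j ∈ S := hiff.mp hi
        simp [hd', hi, hj]
      · have hj : j ∉ S := fun h => hi (hiff.mpr h)
        simp [hd', hi, hj]
    have h2 : (d' i < d' j) ↔ (dstar i < dstar j) := by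
      by_cases hi : i ∈ S
      · have hj : j ∈ S := hiff.mp hi
        simp [hd', hi, hj]
      · have hj : j ∉ S := fun h => hi (hiff.mpr h)
        simp [hd', hi, hj]
    unfold pairTerm
    rw [if_congr h1 rfl rfl, if_congr h2 rfl rfl]
  -- termwise inequality for all pairs
  have key : ∀ i j : Fin n, pairTerm π lam d' i j ≤ pairTerm π lam dstar i j := by
    intro i j
    by_cases hi : i ∈ S <;> by_cases hj : j ∈ S
    · exact le_of_eq (same i j (by tauto))
    · exact (cross i j hi hj).1
    · rw [pairTerm_comm π lam d' i j, pairTerm_comm π lam dstar i j]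
      exact (cross j i hj hi).1
    · exact le_of_eq (same i j (by tauto))
  -- the strict pair
  have hne : s ≠ imax := fun h => himax (h ▸ hs)
  have strict : pairTerm π lam d' s imax < pairTerm π lam dstar s imax :=
    (cross s imax hs himax).2 (hmax s)
  -- choose orientation
  set a : Fin n := if s < imax then imax else s with ha
  set b : Fin n := if s < imax then s else imax with hb
  have hba : b < a := by
    rcases lt_or_gt_of_ne hne with h | h
    · simp [ha, hb, h]
    · simp [ha, hb, not_lt.mpr (le_of_lt h), h]
  have strictab : pairTerm π lam d' a b < pairTerm π lam dstar a b := by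
    by_cases h : s < imax
    · simp only [ha, hb, if_pos h]
      rw [pairTerm_comm π lam d' imax s, pairTerm_comm π lam dstar imax s]
      exact strict
    · simp only [ha, hb, if_neg h]
      exact strict
  -- risk strictly decreases
  have hlt : Risk π lam d' < Risk π lam dstar := by
    rw [Risk_eq_sum_pairTerm, Risk_eq_sum_pairTerm]
    apply Finset.sum_lt_sum
    · intro i _
      exact Finset.sum_le_sum (fun j _ => key i j)
    · refine ⟨a, Finset.mem_univ a, ?_⟩
      apply Finset.sum_lt_sum
      · intro j _
        exact key a j
      · exact ⟨b, by simp [hba], strictab⟩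
  exact absurd (hopt d') (not_le.mpr hlt)
end

section
/- (Unordered λ-Smith candidates are tied) Let S be a set of firms with π_{ij} > 1/(1+λ) for all i ∈ S, j ∉ S, and suppose π_{ij} < 1/(1+λ) for all distinct i, j ∈ S. Then in any risk-minimizing grade assignment, all firms in S receive the same grade, and this grade is strictly greater than the grade of every firm outside S. -/
open Finset

/-- Pair contribution to the risk. -/
noncomputable def gpair {n : ℕ} (π : Fin n → Fin n → ℝ) (lam : ℝ) (d : Fin n → ℕ)
    (i j : Fin n) : ℝ :=
  (π j i - lam * π i j) * (if d i > d j then (1:ℝ) else 0)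
    + (π i j - lam * π j i) * (if d i < d j then (1:ℝ) else 0)

lemma gpair_symm {n : ℕ} (π : Fin n → Fin n → ℝ) (lam : ℝ) (d : Fin n → ℕ) (i j : Fin n) :
    gpair π lam d i j = gpair π lam d j i := by
  unfold gpair
  exact add_comm _ _

lemma Risk_eq_sum {n : ℕ} (π : Fin n → Fin n → ℝ) (lam : ℝ) (d : Fin n → ℕ) :
    Risk π lam d
      = ∑ p ∈ (univ ×ˢ univ).filter (fun p : Fin n × Fin n => p.2 < p.1),
          gpair π lam d p.1 p.2 := by
  rw [Finset.sum_filter, Finset.sum_product]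
  unfold Risk gpair
  simp [Finset.sum_filter]

/-- Unordered λ-Smith candidates are tied: all firms in a dominant but internally
indistinguishable set S receive a common grade, strictly above all outsiders. -/
theorem stmt8 {n : ℕ} (π : Fin n → Fin n → ℝ)
    (hπ01 : ∀ i j : Fin n, i ≠ j → π i j ∈ Set.Icc (0:ℝ) 1)
    (hπ : ∀ i j : Fin n, i ≠ j → π i j + π j i = 1)
    (lam : ℝ) (hlam : lam ∈ Set.Ioo (0:ℝ) 1)
    (S : Finset (Fin n)) (hS : S.Nonempty)
    (hdom : ∀ i ∈ S, ∀ j ∉ S, π i j > 1 / (1 + lam))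
    (hin : ∀ i ∈ S, ∀ j ∈ S, i ≠ j → π i j < 1 / (1 + lam))
    (dstar : Fin n → ℕ) (hopt : ∀ d : Fin n → ℕ, Risk π lam dstar ≤ Risk π lam d) :
    (∀ i ∈ S, ∀ j ∈ S, dstar i = dstar j) ∧
      (∀ i ∈ S, ∀ j ∉ S, dstar i > dstar j) := by
  obtain ⟨hl0, hl1⟩ := hlam
  have h1l : (0:ℝ) < 1 + lam := by linarith
  set B : ℕ := (Finset.univ.sup dstar) + 1 with hB
  have hBgt : ∀ j : Fin n, dstar j < B := fun j =>
    Nat.lt_succ_of_le (Finset.le_sup (mem_univ j))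
  set d' : Fin n → ℕ := fun k => if k ∈ S then B else dstar k with hd'
  -- coefficient signs
  have coef_out : ∀ i ∈ S, ∀ j ∉ S,
      π j i - lam * π i j < 0 ∧ 0 < π i j - lam * π j i := by
    intro i hi j hj
    have hij : i ≠ j := fun h => hj (h ▸ hi)
    have hsum := hπ i j hij
    have hd := hdom i hi j hj
    have h1 : 1 < π i j * (1 + lam) := (div_lt_iff₀ h1l).mp hd
    constructor <;> nlinarith
  have coef_in : ∀ i ∈ S, ∀ j ∈ S, i ≠ j → 0 < π j i - lam * π i j := by
    intro i hi j hj hij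
    have hsum := hπ i j hij
    have hd := hin i hi j hj hij
    have h1 : π i j * (1 + lam) < 1 := (lt_div_iff₀ h1l).mp hd
    nlinarith
  -- pairs inside S
  have hle1 : ∀ i j : Fin n, i ∈ S → j ∈ S → i ≠ j →
      gpair π lam d' i j ≤ gpair π lam dstar i j ∧
        (dstar i ≠ dstar j → gpair π lam d' i j < gpair π lam dstar i j) := by
    intro i j hi hj hij
    have c1 := coef_in i hi j hj hij
    have c2 := coef_in j hj i hi hij.symm
    have hdi : d' i = B := if_pos hi
    have hdj : d' j = B := if_pos hj
    have g0 : gpair π lam d' i j = 0 := by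
      simp [gpair, hdi, hdj]
    constructor
    · rw [g0]
      rcases lt_trichotomy (dstar i) (dstar j) with h | h | h
      · simp [gpair, h, asymm h]; linarith
      · simp [gpair, h]
      · simp [gpair, h, asymm h]; linarith
    · intro hne
      rw [g0]
      rcases lt_trichotomy (dstar i) (dstar j) with h | h | h
      · simp [gpair, h, asymm h]; linarith
      · exact absurd h hne
      · simp [gpair, h, asymm h]; linarith
  -- pairs with i ∈ S, j ∉ S
  have hle2 : ∀ i j : Fin n, i ∈ S → j ∉ S →
      gpair π lam d' i j ≤ gpair π lam dstar i j ∧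
        (¬ dstar j < dstar i → gpair π lam d' i j < gpair π lam dstar i j) := by
    intro i j hi hj
    obtain ⟨c1, c2⟩ := coef_out i hi j hj
    have hdi : d' i = B := if_pos hi
    have hdj : d' j = dstar j := if_neg hj
    have hgt : d' j < d' i := by rw [hdi, hdj]; exact hBgt j
    have gd' : gpair π lam d' i j = π j i - lam * π i j := by
      simp [gpair, hgt, asymm hgt]
    constructor
    · rw [gd']
      rcases lt_trichotomy (dstar i) (dstar j) with h | h | h
      · simp [gpair, h, asymm h]; linarith
      · simp [gpair, h]; linarith
      · simp [gpair, h, asymm h]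
    · intro hnot
      rw [gd']
      rcases lt_or_eq_of_le (not_lt.mp hnot) with h | h
      · simp [gpair, h, asymm h]; linarith
      · simp [gpair, h]; linarith
  -- global termwise comparison
  have hle : ∀ i j : Fin n, gpair π lam d' i j ≤ gpair π lam dstar i j := by
    intro i j
    by_cases hij : i = j
    · subst hij; simp [gpair]
    by_cases hi : i ∈ S <;> by_cases hj : j ∈ S
    · exact (hle1 i j hi hj hij).1
    · exact (hle2 i j hi hj).1
    · rw [gpair_symm π lam d' i j, gpair_symm π lam dstar i j]
      exact (hle2 j i hj hi).1
    · have : ∀ dd : Fin n → ℕ, d' i = dstar i ∧ d' j = dstar j :=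
        fun _ => ⟨if_neg hi, if_neg hj⟩
      obtain ⟨e1, e2⟩ := this dstar
      simp [gpair, e1, e2]
  -- any strict pair gives a contradiction
  have witness : ∀ a b : Fin n, a ≠ b →
      gpair π lam d' a b < gpair π lam dstar a b → False := by
    intro a b hab hlt
    have hsum : Risk π lam d' < Risk π lam dstar := by
      rw [Risk_eq_sum, Risk_eq_sum]
      rcases hab.lt_or_gt with h | h
      · refine Finset.sum_lt_sum (fun p _ => hle p.1 p.2) ⟨(b, a), ?_, ?_⟩
        · simp [Finset.mem_filter, h]
        · rw [gpair_symm π lam d' b a, gpair_symm π lam dstar b a]; exact hlt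
      · exact Finset.sum_lt_sum (fun p _ => hle p.1 p.2)
          ⟨(a, b), by simp [Finset.mem_filter, h], hlt⟩
    exact absurd (hopt d') (not_le.mpr hsum)
  constructor
  · intro i hi j hj
    by_contra hne
    have hij : i ≠ j := fun h => hne (by rw [h])
    exact witness i j hij ((hle1 i j hi hj hij).2 hne)
  · intro i hi j hj
    by_contra hnot
    have hij : i ≠ j := fun h => hj (h ▸ hi)
    exact witness i j hij ((hle2 i j hi hj).2 hnot)
end

section
/- The pairwise constraint system d_{ij} + d_{jk} ≤ 1 + d_{ik}, d_{ik} + (1 - d_{jk}) ≤ 1 + d_{ij}, and e_{ij} + e_{jk} ≤ 1 + e_{ik} for all triples (i,j,k), together with e_{ij} + d_{ij} + d_{ji} = 1 for all pairs, holds whenever d_{ij} = 1{g_i > g_j} and e_{ij} = 1{g_i = g_j} for some grade vector g ∈ ℕ^n. Conversely, any binary variables (d_{ij}, e_{ij}) satisfying these constraints arise from some grade vector g ∈ ℕ^n in this way. -/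
/-- The pairwise decision variables induced by any grade vector satisfy the
transitivity constraint system, and conversely every binary solution of the
constraint system is induced by some grade vector. -/
theorem stmt11 {n : ℕ} :
    (∀ g : Fin n → ℕ,
      ∀ i j k : Fin n, i ≠ j → j ≠ k → i ≠ k →
        ((if g i > g j then (1:ℕ) else 0) + (if g j > g k then 1 else 0)
            ≤ 1 + (if g i > g k then 1 else 0)) ∧
        ((if g i > g k then (1:ℕ) else 0) + (1 - (if g j > g k then 1 else 0))
            ≤ 1 + (if g i > g j then 1 else 0)) ∧
        ((if g i = g j then (1:ℕ) else 0) + (if g j = g k then 1 else 0)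
            ≤ 1 + (if g i = g k then 1 else 0)) ∧
        ((if g i = g j then (1:ℕ) else 0) + (if g i > g j then 1 else 0)
            + (if g j > g i then 1 else 0) = 1)) ∧
    (∀ D E : Fin n → Fin n → ℕ,
      (∀ i j : Fin n, D i j ≤ 1) → (∀ i j : Fin n, E i j ≤ 1) →
      (∀ i j : Fin n, i ≠ j → E i j = E j i) →
      (∀ i j : Fin n, i ≠ j → E i j + D i j + D j i = 1) →
      (∀ i j k : Fin n, i ≠ j → j ≠ k → i ≠ k →
        D i j + D j k ≤ 1 + D i k ∧
        D i k + (1 - D j k) ≤ 1 + D i j ∧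
        E i j + E j k ≤ 1 + E i k) →
      ∃ g : Fin n → ℕ, ∀ i j : Fin n, i ≠ j →
        (D i j = 1 ↔ g i > g j) ∧ (E i j = 1 ↔ g i = g j)) := by
  constructor
  · intro g i j k _ _ _
    refine ⟨?_, ?_, ?_, ?_⟩ <;> split_ifs <;> omega
  · intro D E hD1 hE1 hEsym hsum htr
    set g : Fin n → ℕ := fun i => (Finset.univ.filter (fun k => k ≠ i ∧ D i k = 1)).card with hg
    have hmono : ∀ i j : Fin n, i ≠ j → D i j = 1 → g j < g i := by
      intro i j hij hDij
      apply Finset.card_lt_card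
      constructor
      · intro k hk
        simp only [Finset.mem_filter, Finset.mem_univ, true_and] at hk ⊢
        obtain ⟨hkj, hDjk⟩ := hk
        have hki : k ≠ i := by
          rintro rfl
          have := hsum _ _ hij
          omega
        refine ⟨hki, ?_⟩
        have := (htr i j k hij (Ne.symm hkj) (Ne.symm hki)).1
        have := hD1 i k
        omega
      · intro hsub
        have hj : j ∈ Finset.univ.filter (fun k => k ≠ i ∧ D i k = 1) := by
          simp [Ne.symm hij, hDij]
        have hj' := hsub hj
        simp at hj'
    have heq : ∀ i j : Fin n, i ≠ j → E i j = 1 → g i = g j := by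
      intro i j hij hEij
      have hDij : D i j = 0 := by have := hsum i j hij; omega
      have hDji : D j i = 0 := by have := hsum i j hij; omega
      have key : ∀ a b : Fin n, a ≠ b → D a b = 0 →
          (Finset.univ.filter (fun k => k ≠ a ∧ D a k = 1)) ⊆
          (Finset.univ.filter (fun k => k ≠ b ∧ D b k = 1)) := by
        intro a b hab hDab k hk
        simp only [Finset.mem_filter, Finset.mem_univ, true_and] at hk ⊢
        obtain ⟨hka, hDak⟩ := hk
        have hkb : k ≠ b := by rintro rfl; omega
        refine ⟨hkb, ?_⟩
        have := (htr a b k hab (Ne.symm hkb) (Ne.symm hka)).2.1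
        have := hD1 b k
        omega
      exact le_antisymm (Finset.card_le_card (key i j hij hDij))
        (Finset.card_le_card (key j i (Ne.symm hij) hDji))
    refine ⟨g, fun i j hij => ⟨⟨fun h => hmono i j hij h, fun h => ?_⟩,
      ⟨fun h => heq i j hij h, fun h => ?_⟩⟩⟩
    · have hs := hsum i j hij
      by_contra hne
      have hD0 : D i j = 0 := by have := hD1 i j; omega
      rcases Nat.eq_zero_or_pos (E i j) with hE0 | hEpos
      · have hDji : D j i = 1 := by omega
        have := hmono j i (Ne.symm hij) hDji
        omega
      · have hE : E i j = 1 := by have := hE1 i j; omega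
        have := heq i j hij hE
        omega
    · have hs := hsum i j hij
      by_contra hne
      have hE0 : E i j = 0 := by have := hE1 i j; omega
      rcases Nat.eq_zero_or_pos (D i j) with hd0 | hdpos
      · have hDji : D j i = 1 := by omega
        have := hmono j i (Ne.symm hij) hDji
        omega
      · have hd : D i j = 1 := by have := hD1 i j; omega
        have := hmono i j hij hd
        omega
end

section
/- When ties are measure zero (π_{ij} = 1 - π_{ji} for all i ≠ j), the posterior expected Kemeny distance E[K(θ,d)|Y] differs from Σ_{i>j} (2π_{ij}-1)(d_{ji} - d_{ij}) only by an additive constant not depending on d, where d_{ij} = 1{d_i > d_j}; equivalently, minimizing posterior expected Kemeny distance over grade vectors d is equivalent to minimizing Σ_{i>j} (2π_{ij}-1)(1{d_j>d_i} - 1{d_i>d_j}). -/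
open Finset

/-- Posterior expected Kemeny distance (ties measure zero). -/
noncomputable def expKemeny {n : ℕ} (π : Fin n → Fin n → ℝ) (d : Fin n → ℕ) : ℝ :=
  ∑ i : Fin n, ∑ j ∈ Finset.univ.filter (· < i),
    ((π i j + π j i) * (if d i = d j then (1:ℝ) else 0)
      + (1 + π j i - π i j) * (if d i > d j then (1:ℝ) else 0)
      + (1 + π i j - π j i) * (if d i < d j then (1:ℝ) else 0))

/-- The Condorcet/Kemeny objective. -/
noncomputable def kemenyObj {n : ℕ} (π : Fin n → Fin n → ℝ) (d : Fin n → ℕ) : ℝ :=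
  ∑ i : Fin n, ∑ j ∈ Finset.univ.filter (· < i),
    (2 * π i j - 1) * ((if d j > d i then (1:ℝ) else 0) - (if d i > d j then (1:ℝ) else 0))

/-- When ties are measure zero, the posterior expected Kemeny distance differs from
Σ (2π_{ij}-1)(d_{ji}-d_{ij}) by a constant not depending on d. -/
theorem stmt12 {n : ℕ} (π : Fin n → Fin n → ℝ)
    (hπ : ∀ i j : Fin n, i ≠ j → π i j = 1 - π j i) :
    ∃ c : ℝ, ∀ d : Fin n → ℕ, expKemeny π d = kemenyObj π d + c := by
  refine ⟨∑ i : Fin n, ∑ _j ∈ Finset.univ.filter (· < i), (1:ℝ), fun d => ?_⟩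
  unfold expKemeny kemenyObj
  rw [← Finset.sum_add_distrib]
  refine Finset.sum_congr rfl fun i _ => ?_
  rw [← Finset.sum_add_distrib]
  refine Finset.sum_congr rfl fun j hj => ?_
  have hji : j < i := by simpa using hj
  have h := hπ i j (ne_of_gt hji)
  rcases lt_trichotomy (d i) (d j) with h1 | h1 | h1
  · simp [h1, h1.ne, not_lt.mpr h1.le]
    linarith
  · simp [h1]; linarith
  · simp [h1, h1.ne', not_lt.mpr h1.le]
    linarith
end
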